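/- Exact functors preserve variegated extensions and are compatible with the torsor structure: let φ : C → C′ be an additive exact functor of abelian categories. (a) If (W, a, b) is a variegated extension of 𝐄 by 𝐅 in C, then (φW, φa, φb) is a variegated extension of φ𝐄 by φ𝐅 in C′ (the images of the two short exact sequences under φ, which are again short exact). (b) For any extension 𝐗 of Q by P there is an isomorphism of variegated extensions φ(W + 𝐗) ≅ φ(W) + φ(𝐗), and for any two variegated extensions W, W′ of 𝐄 by 𝐅 there is an isomorphism of extensions φ(W′ − W) ≅ φ(W′) − φ(W) of φQ by φP. -/

import Mathlib

open CategoryTheory Category Limits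

universe w v u

/-- The ambient data: an abelian category `C` together with two short exact sequences
`𝐅 : 0 → P →[ι] F →[π] R → 0` and `𝐄 : 0 → R →[κ] E →[ρ] Q → 0`. -/
structure VarSetup (C : Type u) [Category.{v} C] [Abelian C] where
  P : C
  R : C
  Q : C
  F : C
  E : C
  ι : P ⟶ F
  π : F ⟶ R
  κ : R ⟶ E
  ρ : E ⟶ Q
  wF : ι ≫ π = 0
  seF : (ShortComplex.mk ι π wF).ShortExact
  wE : κ ≫ ρ = 0
  seE : (ShortComplex.mk κ ρ wE).ShortExact

variable {C : Type u} [Category.{v} C] [Abelian C]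

/-- `(W, a, b)` is a variegated extension of `𝐄` by `𝐅`: (i) `b ∘ a = κ ∘ π`,
(ii) `0 → P →[a∘ι] W →[b] E → 0` is short exact, and
(iii) `0 → F →[a] W →[ρ∘b] Q → 0` is short exact. -/
structure IsVarExt (S : VarSetup C) {W : C} (a : S.F ⟶ W) (b : W ⟶ S.E) : Prop where
  comm : a ≫ b = S.π ≫ S.κ
  w1 : (S.ι ≫ a) ≫ b = 0
  se1 : (ShortComplex.mk (S.ι ≫ a) b w1).ShortExact
  w2 : a ≫ (b ≫ S.ρ) = 0
  se2 : (ShortComplex.mk a (b ≫ S.ρ) w2).ShortExact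

/-- A variegated extension of `𝐄` by `𝐅`, bundled. -/
structure VarExt (S : VarSetup C) where
  W : C
  a : S.F ⟶ W
  b : W ⟶ S.E
  isVarExt : IsVarExt S a b

/-- An extension of `Q` by `P`: a short exact sequence `0 → P →[α] X →[β] Q → 0`. -/
structure Extension (P Q : C) where
  X : C
  α : P ⟶ X
  β : X ⟶ Q
  w : α ≫ β = 0
  se : (ShortComplex.mk α β w).ShortExact

section Plus

variable (S : VarSetup C) {W : C} (a : S.F ⟶ W) (b : W ⟶ S.E)
  (h1 : (S.ι ≫ a) ≫ b = 0) (h2 : a ≫ (b ≫ S.ρ) = 0)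
  {X : C} (α : S.P ⟶ X) (β : X ⟶ S.Q) (hw : α ≫ β = 0)

/-- The morphism `P ⟶ V` into the pullback `V` of `(ρ∘b) ⊕ β : W ⊕ X ⟶ Q ⊕ Q`
along the diagonal `Q ⟶ Q ⊕ Q` (i.e. the fibre product of `ρ∘b` and `β` over `Q`),
with components `a∘ι : P ⟶ W` and `−α : P ⟶ X`. -/
noncomputable def plusKer : S.P ⟶ pullback (b ≫ S.ρ) β :=
  pullback.lift (S.ι ≫ a) (-α)
    (by rw [Category.assoc, h2, comp_zero, Preadditive.neg_comp, hw, neg_zero])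

/-- `W + 𝐗`, the cokernel of `plusKer : P ⟶ V`. -/
noncomputable def plusW : C := cokernel (plusKer S a b h2 α β hw)

/-- `a⁺ : F ⟶ W + 𝐗`, induced by `(a, 0) : F ⟶ V`. -/
noncomputable def plusA : S.F ⟶ plusW S a b h2 α β hw :=
  pullback.lift a 0 (by rw [h2, zero_comp]) ≫ cokernel.π _

/-- `b⁺ : W + 𝐗 ⟶ E`, induced by `b` composed with the first projection `V ⟶ W`. -/
noncomputable def plusB : plusW S a b h2 α β hw ⟶ S.E :=
  cokernel.desc _ (pullback.fst (b ≫ S.ρ) β ≫ b) (by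
    rw [← Category.assoc,
      show plusKer S a b h2 α β hw ≫ pullback.fst (b ≫ S.ρ) β = S.ι ≫ a from
        pullback.lift_fst _ _ _, h1])

end Plus

section Diff

variable (S : VarSetup C) {W W' : C} (a : S.F ⟶ W) (b : W ⟶ S.E)
  (a' : S.F ⟶ W') (b' : W' ⟶ S.E)
  (hc : a ≫ b = S.π ≫ S.κ) (hc' : a' ≫ b' = S.π ≫ S.κ)
  (h1 : (S.ι ≫ a) ≫ b = 0) (h2 : a ≫ (b ≫ S.ρ) = 0)

/-- The morphism `F ⟶ V′` into the pullback `V′` of `b ⊕ b′ : W ⊕ W′ ⟶ E ⊕ E` along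
the diagonal `E ⟶ E ⊕ E` (i.e. the fibre product of `b` and `b′` over `E`),
with components `a : F ⟶ W` and `a′ : F ⟶ W′`. -/
noncomputable def diffKer : S.F ⟶ pullback b b' :=
  pullback.lift a a' (by rw [hc, hc'])

/-- `W′ − W`, the cokernel of `diffKer : F ⟶ V′`. -/
noncomputable def diffW : C := cokernel (diffKer S a b a' b' hc hc')

/-- The morphism `P ⟶ W′ − W` induced by `(a∘ι, 0) : P ⟶ V′`. -/
noncomputable def diffP : S.P ⟶ diffW S a b a' b' hc hc' :=
  pullback.lift (S.ι ≫ a) 0 (by rw [h1, zero_comp]) ≫ cokernel.π _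

/-- The morphism `W′ − W ⟶ Q` induced by `ρ∘b` composed with the first
projection `V′ ⟶ W`. -/
noncomputable def diffQ : diffW S a b a' b' hc hc' ⟶ S.Q :=
  cokernel.desc _ (pullback.fst b b' ≫ b ≫ S.ρ) (by
    rw [← Category.assoc,
      show diffKer S a b a' b' hc hc' ≫ pullback.fst b b' = a from pullback.lift_fst _ _ _,
      h2])

lemma diff_w : diffP S a b a' b' hc hc' h1 ≫ diffQ S a b a' b' hc hc' h2 = 0 := by
  rw [diffP, diffQ]
  show (pullback.lift (S.ι ≫ a) 0 _ ≫ cokernel.π (diffKer S a b a' b' hc hc')) ≫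
      cokernel.desc (diffKer S a b a' b' hc hc') (pullback.fst b b' ≫ b ≫ S.ρ) _ = 0
  rw [Category.assoc, cokernel.π_desc, ← Category.assoc, pullback.lift_fst,
    Category.assoc]
  rw [show a ≫ b ≫ S.ρ = 0 from h2, comp_zero]

end Diff


section Functor

universe v' u'

variable {D : Type u'} [Category.{v'} D] [Abelian D]

/-- The image of the ambient data under an exact additive functor: both short exact
sequences are carried to short exact sequences. -/
noncomputable def VarSetup.map (S : VarSetup C) (φ : C ⥤ D) [φ.Additive]
    (hφ : ∀ T : ShortComplex C, T.ShortExact → (T.map φ).ShortExact) : VarSetup D where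
  P := φ.obj S.P
  R := φ.obj S.R
  Q := φ.obj S.Q
  F := φ.obj S.F
  E := φ.obj S.E
  ι := φ.map S.ι
  π := φ.map S.π
  κ := φ.map S.κ
  ρ := φ.map S.ρ
  wF := by rw [← φ.map_comp, S.wF, Functor.map_zero]
  seF := hφ _ S.seF
  wE := by rw [← φ.map_comp, S.wE, Functor.map_zero]
  seE := hφ _ S.seE

end Functor

section CokHelper

universe v' u'

variable {D : Type u'} [Category.{v'} D] [Abelian D]
variable (φ : C ⥤ D) [φ.Additive] [PreservesFiniteLimits φ] [PreservesFiniteColimits φ]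

/-- Comparison isomorphism for cokernels under an exact functor. -/
noncomputable def cokMapIso {A V₀ : C} (k : A ⟶ V₀) {V₁ : D} (j : φ.obj V₀ ≅ V₁)
    (k' : φ.obj A ⟶ V₁) (hk : φ.map k ≫ j.hom = k') :
    φ.obj (cokernel k) ≅ cokernel k' :=
  PreservesCokernel.iso φ k ≪≫ cokernel.mapIso _ _ (Iso.refl _) j (by simp [← hk])

lemma cokMapIso_π {A V₀ : C} (k : A ⟶ V₀) {V₁ : D} (j : φ.obj V₀ ≅ V₁)
    (k' : φ.obj A ⟶ V₁) (hk : φ.map k ≫ j.hom = k') :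
    φ.map (cokernel.π k) ≫ (cokMapIso φ k j k' hk).hom = j.hom ≫ cokernel.π k' := by
  have h0 : φ.map (cokernel.π k) ≫ (PreservesCokernel.iso φ k).hom = cokernel.π (φ.map k) := by
    rw [← π_comp_cokernelComparison, ← PreservesCokernel.iso_inv, Category.assoc,
      Iso.inv_hom_id, Category.comp_id]
  rw [cokMapIso, Iso.trans_hom, ← Category.assoc, h0, cokernel.mapIso_hom, cokernel.π_desc]

lemma cokMapIso_π_inv {A V₀ : C} (k : A ⟶ V₀) {V₁ : D} (j : φ.obj V₀ ≅ V₁)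
    (k' : φ.obj A ⟶ V₁) (hk : φ.map k ≫ j.hom = k') :
    cokernel.π k' ≫ (cokMapIso φ k j k' hk).inv = j.inv ≫ φ.map (cokernel.π k) := by
  rw [Iso.comp_inv_eq, Category.assoc, cokMapIso_π, Iso.inv_hom_id_assoc]

lemma cokMapIso_lift {A V₀ B : C} (k : A ⟶ V₀) {V₁ : D} (j : φ.obj V₀ ≅ V₁)
    (k' : φ.obj A ⟶ V₁) (hk : φ.map k ≫ j.hom = k')
    (l : B ⟶ V₀) (l' : φ.obj B ⟶ V₁) (hl : φ.map l ≫ j.hom = l') :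
    φ.map (l ≫ cokernel.π k) ≫ (cokMapIso φ k j k' hk).hom = l' ≫ cokernel.π k' := by
  rw [φ.map_comp, Category.assoc, cokMapIso_π, ← Category.assoc, hl]

lemma cokMapIso_desc {A V₀ T : C} (k : A ⟶ V₀) {V₁ : D} (j : φ.obj V₀ ≅ V₁)
    (k' : φ.obj A ⟶ V₁) (hk : φ.map k ≫ j.hom = k')
    (f : V₀ ⟶ T) (hf : k ≫ f = 0) (f' : V₁ ⟶ φ.obj T) (hf' : k' ≫ f' = 0)
    (hcomm : φ.map f = j.hom ≫ f') :
    (cokMapIso φ k j k' hk).hom ≫ cokernel.desc k' f' hf' =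
      φ.map (cokernel.desc k f hf) := by
  rw [← Iso.eq_inv_comp]
  apply coequalizer.hom_ext
  rw [cokernel.π_desc, ← Category.assoc, cokMapIso_π_inv, Category.assoc, ← φ.map_comp,
    cokernel.π_desc, hcomm, Iso.inv_hom_id_assoc]

end CokHelper

section Functor

universe v' u'

variable {D : Type u'} [Category.{v'} D] [Abelian D]

variable (φ : C ⥤ D) [φ.Additive]
  (hφ : ∀ T : ShortComplex C, T.ShortExact → (T.map φ).ShortExact)
  (S : VarSetup C)

lemma map_comm (V : VarExt S) :
    φ.map V.a ≫ φ.map V.b = φ.map S.π ≫ φ.map S.κ := by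
  rw [← φ.map_comp, V.isVarExt.comm, φ.map_comp]

lemma map_w1 (V : VarExt S) :
    (φ.map S.ι ≫ φ.map V.a) ≫ φ.map V.b = 0 := by
  rw [← φ.map_comp, ← φ.map_comp, V.isVarExt.w1, Functor.map_zero]

lemma map_w2 (V : VarExt S) :
    φ.map V.a ≫ (φ.map V.b ≫ φ.map S.ρ) = 0 := by
  rw [← φ.map_comp, ← φ.map_comp, V.isVarExt.w2, Functor.map_zero]

lemma map_extw (X : Extension S.P S.Q) : φ.map X.α ≫ φ.map X.β = 0 := by
  rw [← φ.map_comp, X.w, Functor.map_zero]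

/-- Exact functors preserve variegated extensions and are compatible with the torsor
structure: (a) the image of a variegated extension of `𝐄` by `𝐅` is a variegated
extension of `φ𝐄` by `φ𝐅`; (b) `φ(W + 𝐗) ≅ φ(W) + φ(𝐗)` as variegated extensions, and
`φ(W′ − W) ≅ φ(W′) − φ(W)` as extensions of `φQ` by `φP`. -/
theorem exact_functor_preserves_varext :
    (∀ (W : C) (a : S.F ⟶ W) (b : W ⟶ S.E), IsVarExt S a b →
      IsVarExt (S.map φ hφ) (φ.map a) (φ.map b)) ∧
    (∀ (V : VarExt S) (X : Extension S.P S.Q),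
      ∃ e : φ.obj (plusW S V.a V.b V.isVarExt.w2 X.α X.β X.w) ≅
          plusW (S.map φ hφ) (φ.map V.a) (φ.map V.b) (map_w2 φ S V)
            (φ.map X.α) (φ.map X.β) (map_extw φ S X),
        φ.map (plusA S V.a V.b V.isVarExt.w2 X.α X.β X.w) ≫ e.hom =
            plusA (S.map φ hφ) (φ.map V.a) (φ.map V.b) (map_w2 φ S V)
              (φ.map X.α) (φ.map X.β) (map_extw φ S X) ∧
          e.hom ≫ plusB (S.map φ hφ) (φ.map V.a) (φ.map V.b) (map_w1 φ S V)
              (map_w2 φ S V) (φ.map X.α) (φ.map X.β) (map_extw φ S X) =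
            φ.map (plusB S V.a V.b V.isVarExt.w1 V.isVarExt.w2 X.α X.β X.w)) ∧
    (∀ V V' : VarExt S,
      ∃ e : φ.obj (diffW S V.a V.b V'.a V'.b V.isVarExt.comm V'.isVarExt.comm) ≅
          diffW (S.map φ hφ) (φ.map V.a) (φ.map V.b) (φ.map V'.a) (φ.map V'.b)
            (map_comm φ S V) (map_comm φ S V'),
        φ.map (diffP S V.a V.b V'.a V'.b V.isVarExt.comm V'.isVarExt.comm
            V.isVarExt.w1) ≫ e.hom =
          diffP (S.map φ hφ) (φ.map V.a) (φ.map V.b) (φ.map V'.a) (φ.map V'.b)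
            (map_comm φ S V) (map_comm φ S V') (map_w1 φ S V) ∧
        e.hom ≫ diffQ (S.map φ hφ) (φ.map V.a) (φ.map V.b) (φ.map V'.a) (φ.map V'.b)
            (map_comm φ S V) (map_comm φ S V') (map_w2 φ S V) =
          φ.map (diffQ S V.a V.b V'.a V'.b V.isVarExt.comm V'.isVarExt.comm
            V.isVarExt.w2)) := by
  obtain ⟨hL, hR⟩ := ((Functor.exact_tfae φ).out 0 3).mp hφ
  refine ⟨?_, ?_, ?_⟩
  · -- (a)
    intro W a b h
    refine { comm := ?_, w1 := ?_, se1 := ?_, w2 := ?_, se2 := ?_ }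
    · dsimp [VarSetup.map]; rw [← φ.map_comp, h.comm, φ.map_comp]
    · dsimp [VarSetup.map]; rw [← φ.map_comp, ← φ.map_comp, h.w1, Functor.map_zero]; rfl
    · refine ShortComplex.shortExact_of_iso ?_ (hφ _ h.se1)
      exact ShortComplex.isoMk (Iso.refl _) (Iso.refl _) (Iso.refl _)
        (by dsimp [VarSetup.map, ShortComplex.map]; simp)
        (by dsimp [VarSetup.map, ShortComplex.map]; simp)
    · dsimp [VarSetup.map]; rw [← φ.map_comp, ← φ.map_comp, h.w2, Functor.map_zero]; rfl
    · refine ShortComplex.shortExact_of_iso ?_ (hφ _ h.se2)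
      exact ShortComplex.isoMk (Iso.refl _) (Iso.refl _) (Iso.refl _)
        (by dsimp [VarSetup.map, ShortComplex.map]; simp)
        (by dsimp [VarSetup.map, ShortComplex.map]; simp)
  · -- (b) plus
    intro V X
    let j : φ.obj (pullback (V.b ≫ S.ρ) X.β) ≅
        pullback (φ.map V.b ≫ (S.map φ hφ).ρ) (φ.map X.β) :=
      PreservesPullback.iso φ _ _ ≪≫ pullback.congrHom (φ.map_comp _ _) rfl
    have hcfst : (pullback.congrHom (φ.map_comp V.b S.ρ) rfl).hom ≫
        pullback.fst (φ.map V.b ≫ (S.map φ hφ).ρ) (φ.map X.β) =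
        pullback.fst (φ.map (V.b ≫ S.ρ)) (φ.map X.β) :=
      (pullback.lift_fst _ _ _).trans (Category.comp_id _)
    have hcsnd : (pullback.congrHom (φ.map_comp V.b S.ρ) rfl).hom ≫
        pullback.snd (φ.map V.b ≫ (S.map φ hφ).ρ) (φ.map X.β) =
        pullback.snd (φ.map (V.b ≫ S.ρ)) (φ.map X.β) :=
      (pullback.lift_snd _ _ _).trans (Category.comp_id _)
    have hjfst : j.hom ≫ pullback.fst (φ.map V.b ≫ (S.map φ hφ).ρ) (φ.map X.β) =
        φ.map (pullback.fst (V.b ≫ S.ρ) X.β) := by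
      dsimp only [j]
      erw [Iso.trans_hom, Category.assoc, hcfst, PreservesPullback.iso_hom_fst]
    have hjsnd : j.hom ≫ pullback.snd (φ.map V.b ≫ (S.map φ hφ).ρ) (φ.map X.β) =
        φ.map (pullback.snd (V.b ≫ S.ρ) X.β) := by
      dsimp only [j]
      erw [Iso.trans_hom, Category.assoc, hcsnd, PreservesPullback.iso_hom_snd]
    have hk : φ.map (plusKer S V.a V.b V.isVarExt.w2 X.α X.β X.w) ≫ j.hom =
        plusKer (S.map φ hφ) (φ.map V.a) (φ.map V.b) (map_w2 φ S V)
          (φ.map X.α) (φ.map X.β) (map_extw φ S X) := by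
      apply pullback.hom_ext
      · rw [Category.assoc, hjfst, ← φ.map_comp]
        erw [show plusKer S V.a V.b V.isVarExt.w2 X.α X.β X.w ≫
            pullback.fst (V.b ≫ S.ρ) X.β = S.ι ≫ V.a from pullback.lift_fst _ _ _,
          show plusKer (S.map φ hφ) (φ.map V.a) (φ.map V.b) (map_w2 φ S V)
            (φ.map X.α) (φ.map X.β) (map_extw φ S X) ≫ _ = (S.map φ hφ).ι ≫ φ.map V.a from
            pullback.lift_fst _ _ _, φ.map_comp]
        rfl
      · rw [Category.assoc, hjsnd, ← φ.map_comp]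
        erw [show plusKer S V.a V.b V.isVarExt.w2 X.α X.β X.w ≫
            pullback.snd (V.b ≫ S.ρ) X.β = -X.α from pullback.lift_snd _ _ _,
          show plusKer (S.map φ hφ) (φ.map V.a) (φ.map V.b) (map_w2 φ S V)
            (φ.map X.α) (φ.map X.β) (map_extw φ S X) ≫ _ = -(φ.map X.α) from
            pullback.lift_snd _ _ _, φ.map_neg]
    refine ⟨cokMapIso φ _ j _ hk, ?_, ?_⟩
    · unfold plusA
      refine (cokMapIso_lift φ _ j _ hk _ _ ?_).trans rfl
      apply pullback.hom_ext
      · rw [Category.assoc, hjfst, ← φ.map_comp, pullback.lift_fst]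
        exact (pullback.lift_fst _ _ _).symm
      · rw [Category.assoc, hjsnd, ← φ.map_comp, pullback.lift_snd, φ.map_zero]
        exact (pullback.lift_snd _ _ _).symm
    · unfold plusB
      apply cokMapIso_desc
      rw [φ.map_comp, ← hjfst, Category.assoc]
      rfl
  · -- (b) diff
    intro V V'
    let j : φ.obj (pullback V.b V'.b) ≅ pullback (φ.map V.b) (φ.map V'.b) :=
      PreservesPullback.iso φ _ _
    have hjfst : j.hom ≫ pullback.fst (φ.map V.b) (φ.map V'.b) =
        φ.map (pullback.fst V.b V'.b) := PreservesPullback.iso_hom_fst φ _ _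
    have hjsnd : j.hom ≫ pullback.snd (φ.map V.b) (φ.map V'.b) =
        φ.map (pullback.snd V.b V'.b) := PreservesPullback.iso_hom_snd φ _ _
    have hk : φ.map (diffKer S V.a V.b V'.a V'.b V.isVarExt.comm V'.isVarExt.comm) ≫ j.hom =
        diffKer (S.map φ hφ) (φ.map V.a) (φ.map V.b) (φ.map V'.a) (φ.map V'.b)
          (map_comm φ S V) (map_comm φ S V') := by
      apply pullback.hom_ext
      · rw [Category.assoc, hjfst, ← φ.map_comp]
        rw [show diffKer S V.a V.b V'.a V'.b V.isVarExt.comm V'.isVarExt.comm ≫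
            pullback.fst V.b V'.b = V.a from pullback.lift_fst _ _ _]
        exact (pullback.lift_fst _ _ _).symm
      · rw [Category.assoc, hjsnd, ← φ.map_comp]
        rw [show diffKer S V.a V.b V'.a V'.b V.isVarExt.comm V'.isVarExt.comm ≫
            pullback.snd V.b V'.b = V'.a from pullback.lift_snd _ _ _]
        exact (pullback.lift_snd _ _ _).symm
    refine ⟨cokMapIso φ _ j _ hk, ?_, ?_⟩
    · unfold diffP
      refine (cokMapIso_lift φ _ j _ hk _ _ ?_).trans rfl
      apply pullback.hom_ext
      · rw [Category.assoc, hjfst, ← φ.map_comp, pullback.lift_fst, φ.map_comp]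
        exact (pullback.lift_fst _ _ _).symm
      · rw [Category.assoc, hjsnd, ← φ.map_comp, pullback.lift_snd, φ.map_zero]
        exact (pullback.lift_snd _ _ _).symm
    · unfold diffQ
      apply cokMapIso_desc
      rw [φ.map_comp, φ.map_comp, ← hjfst]
      simp only [Category.assoc]
      rfl

end Functor
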